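/- arXiv:1304.4150 — 5 statements merged into one kernel-verified Lean document; each statement's English description precedes it below -/
import Mathlib

section
/- Over the alphabet Fin 2 (write a = 0 and b = 1), the relation T = {(List.replicate m a, List.replicate m b ++ List.replicate m' a) | m m' : ℕ, m ≤ m'} is not a rational relation: for every finite type Γ, every regular language L : Language Γ, and all functions f g : Γ → Option (Fin 2), the set {(u.filterMap f, u.filterMap g) | u ∈ L} is not equal to T. (T is the intersection of the regular relation {(a^m, b^m·a^{m'}) | m, m' : ℕ} with the subsequence relation.) -/
/-!
Projecting onto the second component, the language `{bᵐ aᵐ' | m ≤ m'}` would be the image of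
the regular language `L` under the alphabetic morphism `g`, hence regular: an NFA for the image
reads one letter by running a DFA for `L` over a block of letters that `g` maps to it. But the
left quotients of `{bᵐ aᵐ' | m ≤ m'}` by the words `bᵏ` are pairwise distinct, since `aʲ` lies
in the `k`-th one exactly when `k ≤ j`, so the Myhill–Nerode theorem rules out regularity.
-/

/-- A language is regular if it is accepted by a DFA with finitely many states. -/
def IsRegularLang {A : Type} (L : Language A) : Prop :=
  ∃ (Q : Type) (_ : Fintype Q) (M : DFA A Q), M.accepts = L

open List

universe u v w

theorem List.replicate_append_replicate_inj {α : Type u} {a b : α} (hab : a ≠ b)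
    {m m' k k' : ℕ} :
    replicate m b ++ replicate m' a = replicate k b ++ replicate k' a ↔ m = k ∧ m' = k' := by
  classical
  refine ⟨fun h => ⟨?_, ?_⟩, by rintro ⟨rfl, rfl⟩; rfl⟩
  · simpa [count_replicate, hab] using congrArg (count b) h
  · simpa [count_replicate, hab.symm] using congrArg (count a) h

namespace Language

variable {α : Type u} {β : Type v}

def filterMap (g : α → Option β) (L : Language α) : Language β :=
  {v | ∃ u ∈ L, u.filterMap g = v}

theorem mem_filterMap {g : α → Option β} {L : Language α} {v : List β} :
    v ∈ L.filterMap g ↔ ∃ u ∈ L, u.filterMap g = v :=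
  Iff.rfl

end Language

namespace DFA

variable {α : Type u} {β : Type v} {σ : Type w}

def filterMapNFA (M : DFA α σ) (g : α → Option β) : NFA β σ where
  step q b := {q' | ∃ w : List α, w.filterMap g = [b] ∧ M.evalFrom q w = q'}
  start := {q | ∃ w : List α, w.filterMap g = [] ∧ M.eval w = q}
  accept := M.accept

theorem mem_filterMapNFA_eval (M : DFA α σ) (g : α → Option β) (v : List β) (q : σ) :
    q ∈ (M.filterMapNFA g).eval v ↔ ∃ u : List α, u.filterMap g = v ∧ M.eval u = q := by
  induction v using List.reverseRecOn generalizing q with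
  | nil => exact Iff.rfl
  | append_singleton v b ih =>
    simp only [NFA.eval_append_singleton, NFA.mem_stepSet, ih, filterMap_eq_append_iff]
    constructor
    · rintro ⟨_, ⟨u, hu, rfl⟩, w, hw, rfl⟩
      exact ⟨u ++ w, ⟨u, w, rfl, hu, hw⟩, M.evalFrom_of_append M.start u w⟩
    · rintro ⟨_, ⟨u, w, rfl, hu, hw⟩, rfl⟩
      exact ⟨M.eval u, ⟨u, hu, rfl⟩, w, hw, (M.evalFrom_of_append M.start u w).symm⟩

theorem filterMapNFA_accepts (M : DFA α σ) (g : α → Option β) :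
    (M.filterMapNFA g).accepts = M.accepts.filterMap g := by
  ext v
  constructor
  · rintro ⟨q, hq, hv⟩
    obtain ⟨u, hu, rfl⟩ := (M.mem_filterMapNFA_eval g v q).mp hv
    exact ⟨u, hq, hu⟩
  · rintro ⟨u, hu, rfl⟩
    exact ⟨M.eval u, hu, (M.mem_filterMapNFA_eval g _ _).mpr ⟨u, rfl, rfl⟩⟩

end DFA

namespace Language

variable {α : Type u}

theorem IsRegular.filterMap {β : Type v} {L : Language α} (hL : L.IsRegular)
    (g : α → Option β) : (L.filterMap g).IsRegular := by
  obtain ⟨σ, _, M, rfl⟩ := hL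
  exact ⟨Set σ, inferInstance, (M.filterMapNFA g).toDFA,
    by rw [NFA.toDFA_correct, DFA.filterMapNFA_accepts]⟩

def replicateLeReplicate (b a : α) : Language α :=
  {w | ∃ m m', m ≤ m' ∧ w = replicate m b ++ replicate m' a}

theorem mem_replicateLeReplicate {b a : α} {w : List α} :
    w ∈ replicateLeReplicate b a ↔ ∃ m m', m ≤ m' ∧ w = replicate m b ++ replicate m' a :=
  Iff.rfl

theorem replicate_append_replicate_mem_replicateLeReplicate {a b : α} (hab : a ≠ b) (k j : ℕ) :
    replicate k b ++ replicate j a ∈ replicateLeReplicate b a ↔ k ≤ j := by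
  constructor
  · rintro ⟨m, m', hm, h⟩
    obtain ⟨rfl, rfl⟩ := (replicate_append_replicate_inj hab).mp h
    exact hm
  · exact fun h => ⟨k, j, h, rfl⟩

theorem not_isRegular_replicateLeReplicate {a b : α} (hab : a ≠ b) :
    ¬ (replicateLeReplicate b a).IsRegular := by
  set K := replicateLeReplicate b a
  have mem_K := replicate_append_replicate_mem_replicateLeReplicate hab
  intro hK
  have quotient_injective : Function.Injective fun k => K.leftQuotient (replicate k b) := by
    intro k k' h
    have (j : ℕ) : k ≤ j ↔ k' ≤ j := by
      rw [← mem_K, ← mem_K, ← mem_leftQuotient, ← mem_leftQuotient]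
      exact Set.ext_iff.mp h _
    exact le_antisymm ((this k').mpr le_rfl) ((this k).mp le_rfl)
  exact Set.infinite_range_of_injective quotient_injective <|
    hK.finite_range_leftQuotient.subset (Set.range_subset_iff.mpr fun k => ⟨_, rfl⟩)

end Language

theorem intersection_regular_subseq_not_rational_general
    (Γ : Type) (L : Language Γ) (hL : IsRegularLang L)
    (f g : Γ → Option (Fin 2)) :
    {p : List (Fin 2) × List (Fin 2) | ∃ u ∈ L, p = (u.filterMap f, u.filterMap g)} ≠
    {p : List (Fin 2) × List (Fin 2) | ∃ m m' : ℕ, m ≤ m' ∧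
      p = (List.replicate m (0 : Fin 2),
           List.replicate m (1 : Fin 2) ++ List.replicate m' (0 : Fin 2))} := by
  intro h
  have hsnd := congrArg (Set.image Prod.snd) h
  have image_eq : L.filterMap g = Language.replicateLeReplicate 1 0 := by
    ext w
    simpa [Language.mem_filterMap, Language.mem_replicateLeReplicate, eq_comm] using
      Set.ext_iff.mp hsnd w
  exact Language.not_isRegular_replicateLeReplicate (a := (0 : Fin 2)) (b := 1) (by decide)
    (image_eq ▸ Language.IsRegular.filterMap hL g)

/-- The relation `{(aᵐ, bᵐ·aᵐ') | m ≤ m'}` (the intersection of a regular relation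
with the subsequence relation) is not a rational relation, in the sense of Nivat's
characterization of binary rational relations. -/
theorem intersection_regular_subseq_not_rational
    (Γ : Type) [Fintype Γ] (L : Language Γ) (hL : IsRegularLang L)
    (f g : Γ → Option (Fin 2)) :
    {p : List (Fin 2) × List (Fin 2) | ∃ u ∈ L, p = (u.filterMap f, u.filterMap g)} ≠
    {p : List (Fin 2) × List (Fin 2) | ∃ m m' : ℕ, m ≤ m' ∧
      p = (List.replicate m (0 : Fin 2),
           List.replicate m (1 : Fin 2) ++ List.replicate m' (0 : Fin 2))} :=
  intersection_regular_subseq_not_rational_general Γ L hL f g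
end

section
/- Padding with blank self-loops synchronizes solutions: let A, B, σ₀, σ₁ be types and N₀ : NFA (Option A × Option B) σ₀, N₁ : NFA (Option A × Option B) σ₁ be Mathlib NFAs. For i = 0, 1 let N_i' be the NFA with the same start and accept sets as N_i and with step function q, x ↦ N_i.step q x ∪ (if x = (none, none) then {q} else ∅). Then for all x₀ x₁ : List A the following are equivalent: (i) there exist w₀ ∈ N₀.accepts and w₁ ∈ N₁.accepts with w₀.filterMap Prod.snd = w₁.filterMap Prod.snd, w₀.filterMap Prod.fst = x₀ and w₁.filterMap Prod.fst = x₁; (ii) there exist w₀' ∈ N₀'.accepts and w₁' ∈ N₁'.accepts with w₀'.map Prod.snd = w₁'.map Prod.snd (a synchronized solution: the raw sequences of second components, including none letters, coincide), w₀'.filterMap Prod.fst = x₀ and w₁'.filterMap Prod.fst = x₁. -/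
/-- Pad an NFA over a product alphabet with blank `(none, none)` self-loops:
same start and accept sets, and the step function allows staying in place on
the letter `(none, none)`. -/
def padNFA {A B σ : Type*} (N : NFA (Option A × Option B) σ) :
    NFA (Option A × Option B) σ where
  step q x := N.step q x ∪ {q' | x = ((none : Option A), (none : Option B)) ∧ q' = q}
  start := N.start
  accept := N.accept

section aux

variable {A B : Type*}

/-- `Pad w u` means `u` is `w` with some `(none, none)` letters inserted. -/
inductive Pad : List (Option A × Option B) → List (Option A × Option B) → Prop
  | nil : Pad [] []
  | cons (a : Option A × Option B) {w u : List (Option A × Option B)} :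
      Pad w u → Pad (a :: w) (a :: u)
  | pad {w u : List (Option A × Option B)} :
      Pad w u → Pad w (((none : Option A), (none : Option B)) :: u)

theorem Pad.filterMap_fst {w u : List (Option A × Option B)} (h : Pad w u) :
    u.filterMap Prod.fst = w.filterMap Prod.fst := by
  induction h with
  | nil => rfl
  | cons a h ih => cases a with | mk a b => cases a <;> simp [ih]
  | pad h ih => simp [ih]

theorem Pad.filterMap_snd {w u : List (Option A × Option B)} (h : Pad w u) :
    u.filterMap Prod.snd = w.filterMap Prod.snd := by
  induction h with
  | nil => rfl
  | cons a h ih => cases a with | mk a b => cases b <;> simp [ih]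
  | pad h ih => simp [ih]

variable {σ : Type*}

theorem evalFrom_mono (M : NFA (Option A × Option B) σ) {S T : Set σ} (hST : S ⊆ T)
    (w : List (Option A × Option B)) : M.evalFrom S w ⊆ M.evalFrom T w := by
  induction w generalizing S T with
  | nil => simpa using hST
  | cons a w ih =>
      have : M.stepSet S a ⊆ M.stepSet T a := by
        intro s hs
        rw [NFA.mem_stepSet] at hs ⊢
        obtain ⟨t, ht, hs⟩ := hs
        exact ⟨t, hST ht, hs⟩
      exact ih this

theorem evalFrom_union (M : NFA (Option A × Option B) σ) (S T : Set σ)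
    (w : List (Option A × Option B)) :
    M.evalFrom (S ∪ T) w = M.evalFrom S w ∪ M.evalFrom T w := by
  induction w generalizing S T with
  | nil => simp [NFA.evalFrom]
  | cons a w ih =>
      have hstep : M.stepSet (S ∪ T) a = M.stepSet S a ∪ M.stepSet T a := by
        ext s
        simp only [NFA.mem_stepSet, Set.mem_union]
        constructor
        · rintro ⟨t, ht | ht, hs⟩
          · exact Or.inl ⟨t, ht, hs⟩
          · exact Or.inr ⟨t, ht, hs⟩
        · rintro (⟨t, ht, hs⟩ | ⟨t, ht, hs⟩)
          · exact ⟨t, Or.inl ht, hs⟩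
          · exact ⟨t, Or.inr ht, hs⟩
      show M.evalFrom (M.stepSet (S ∪ T) a) w = _
      rw [hstep, ih]
      rfl

theorem pad_stepSet (N : NFA (Option A × Option B) σ) (S : Set σ) (a : Option A × Option B) :
    (padNFA N).stepSet S a =
      N.stepSet S a ∪ {s | a = ((none : Option A), (none : Option B)) ∧ s ∈ S} := by
  ext s
  simp only [NFA.mem_stepSet, Set.mem_union, Set.mem_setOf_eq, padNFA]
  constructor
  · rintro ⟨t, ht, hs | ⟨rfl, rfl⟩⟩
    · exact Or.inl ⟨t, ht, hs⟩
    · exact Or.inr ⟨rfl, ht⟩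
  · rintro (⟨t, ht, hs⟩ | ⟨rfl, hs⟩)
    · exact ⟨t, ht, Or.inl hs⟩
    · exact ⟨s, hs, Or.inr ⟨rfl, rfl⟩⟩

theorem pad_evalFrom (N : NFA (Option A × Option B) σ) {w u : List (Option A × Option B)}
    (h : Pad w u) : ∀ S : Set σ, N.evalFrom S w ⊆ (padNFA N).evalFrom S u := by
  induction h with
  | nil => intro S; exact subset_refl _
  | cons a h ih =>
      intro S
      show N.evalFrom (N.stepSet S a) _ ⊆ (padNFA N).evalFrom ((padNFA N).stepSet S a) _
      refine (ih _).trans (evalFrom_mono _ ?_ _)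
      rw [pad_stepSet]; exact Set.subset_union_left
  | pad h ih =>
      intro S
      show N.evalFrom S _ ⊆
        (padNFA N).evalFrom ((padNFA N).stepSet S ((none : Option A), (none : Option B))) _
      refine (ih _).trans (evalFrom_mono _ ?_ _)
      rw [pad_stepSet]
      exact fun s hs => Or.inr ⟨rfl, hs⟩

theorem unpad_evalFrom (N : NFA (Option A × Option B) σ) :
    ∀ (u : List (Option A × Option B)) (S : Set σ) (q : σ),
      q ∈ (padNFA N).evalFrom S u → ∃ w, Pad w u ∧ q ∈ N.evalFrom S w := by
  intro u
  induction u with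
  | nil => exact fun S q hq => ⟨[], Pad.nil, hq⟩
  | cons a u ih =>
      intro S q hq
      have hq' : q ∈ (padNFA N).evalFrom ((padNFA N).stepSet S a) u := hq
      obtain ⟨w', hpad, hw'⟩ := ih _ q hq'
      rw [pad_stepSet] at hw'
      rw [evalFrom_union] at hw'
      rcases hw' with hw' | hw'
      · exact ⟨a :: w', Pad.cons a hpad, hw'⟩
      · by_cases ha : a = ((none : Option A), (none : Option B))
        · subst ha
          refine ⟨w', Pad.pad hpad, ?_⟩
          refine evalFrom_mono N ?_ _ hw'
          intro s hs; exact hs.2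
        · exfalso
          have : {s : σ | a = ((none : Option A), (none : Option B)) ∧ s ∈ S} = ∅ := by
            ext s; simp [ha]
          rw [this] at hw'
          have hempty : ∀ (v : List (Option A × Option B)),
              N.evalFrom (∅ : Set σ) v = ∅ := by
            intro v
            induction v with
            | nil => rfl
            | cons b v ihv =>
                have : N.stepSet (∅ : Set σ) b = ∅ := by
                  ext s; simp [NFA.mem_stepSet]
                show N.evalFrom (N.stepSet ∅ b) v = ∅
                rw [this, ihv]
          rw [hempty] at hw'
          exact hw'

/-- If the `filterMap Prod.snd` is empty, all second components are `none`. -/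
theorem map_snd_of_filterMap_nil {w : List (Option A × Option B)}
    (h : w.filterMap Prod.snd = []) :
    w.map Prod.snd = List.replicate w.length (none : Option B) := by
  induction w with
  | nil => rfl
  | cons a w ih =>
      cases a with
      | mk a b =>
        cases b with
        | none =>
            rw [List.filterMap_cons_none rfl] at h
            simp only [List.map_cons, List.length_cons, List.replicate_succ]
            rw [ih h]
        | some b => simp at h

/-- Synchronization: two words with equal second projections can be padded to have
equal raw second components. -/
theorem sync (w₀ w₁ : List (Option A × Option B))
    (h : w₀.filterMap Prod.snd = w₁.filterMap Prod.snd) :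
    ∃ u₀ u₁, Pad w₀ u₀ ∧ Pad w₁ u₁ ∧ u₀.map Prod.snd = u₁.map Prod.snd := by
  induction w₀ generalizing w₁ with
  | nil =>
      refine ⟨w₁.map (fun _ => ((none : Option A), (none : Option B))), w₁, ?_, ?_, ?_⟩
      · clear h; induction w₁ with
        | nil => exact Pad.nil
        | cons a w ih => exact Pad.pad ih
      · clear h; induction w₁ with
        | nil => exact Pad.nil
        | cons a w ih => exact Pad.cons a ih
      · rw [map_snd_of_filterMap_nil h.symm]
        simp [List.map_map, Function.comp, List.eq_replicate_iff]
  | cons p₀ t₀ ih₀ =>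
      obtain ⟨a₀, b₀⟩ := p₀
      induction w₁ with
      | nil =>
          cases b₀ with
          | none =>
              simp only [List.filterMap_cons_none, List.filterMap_nil] at h
              obtain ⟨u₀, u₁, hp₀, hp₁, heq⟩ := ih₀ [] (by simpa using h)
              refine ⟨(a₀, none) :: u₀, ((none : Option A), (none : Option B)) :: u₁,
                Pad.cons _ hp₀, Pad.pad hp₁, ?_⟩
              simpa using heq
          | some b => simp at h
      | cons p₁ t₁ ih₁ =>
          obtain ⟨a₁, b₁⟩ := p₁
          cases b₀ with
          | none =>
              simp only [List.filterMap_cons_none] at h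
              obtain ⟨u₀, u₁, hp₀, hp₁, heq⟩ := ih₀ ((a₁, b₁) :: t₁) h
              refine ⟨(a₀, (none : Option B)) :: u₀,
                ((none : Option A), (none : Option B)) :: u₁,
                Pad.cons _ hp₀, Pad.pad hp₁, ?_⟩
              simpa using heq
          | some b₀ =>
              cases b₁ with
              | none =>
                  simp only [List.filterMap_cons_none] at h
                  obtain ⟨u₀, u₁, hp₀, hp₁, heq⟩ := ih₁ h
                  refine ⟨((none : Option A), (none : Option B)) :: u₀,
                    (a₁, (none : Option B)) :: u₁,
                    Pad.pad hp₀, Pad.cons _ hp₁, ?_⟩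
                  simpa using heq
              | some b₁ =>
                  rw [List.filterMap_cons_some (f := Prod.snd) (b := b₀) rfl,
                    List.filterMap_cons_some (f := Prod.snd) (b := b₁) rfl,
                    List.cons_eq_cons] at h
                  obtain ⟨hb, h⟩ := h
                  obtain ⟨u₀, u₁, hp₀, hp₁, heq⟩ := ih₀ t₁ h
                  refine ⟨(a₀, some b₀) :: u₀, (a₁, some b₁) :: u₁,
                    Pad.cons _ hp₀, Pad.cons _ hp₁, ?_⟩
                  simp [heq, hb]

theorem pad_accepts (N : NFA (Option A × Option B) σ) {w u : List (Option A × Option B)}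
    (h : Pad w u) (hw : w ∈ N.accepts) : u ∈ (padNFA N).accepts := by
  rw [NFA.mem_accepts] at hw ⊢
  obtain ⟨q, hq, hqe⟩ := hw
  exact ⟨q, hq, pad_evalFrom N h _ hqe⟩

theorem unpad_accepts (N : NFA (Option A × Option B) σ) {u : List (Option A × Option B)}
    (hu : u ∈ (padNFA N).accepts) : ∃ w, Pad w u ∧ w ∈ N.accepts := by
  rw [NFA.mem_accepts] at hu
  obtain ⟨q, hq, hqe⟩ := hu
  obtain ⟨w, hpad, hw⟩ := unpad_evalFrom N u _ q hqe
  refine ⟨w, hpad, ?_⟩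
  rw [NFA.mem_accepts]
  exact ⟨q, hq, hw⟩

end aux

/-- Padding with blank self-loops synchronizes solutions. -/
theorem pad_synchronizes {A B σ₀ σ₁ : Type*}
    (N₀ : NFA (Option A × Option B) σ₀) (N₁ : NFA (Option A × Option B) σ₁)
    (x₀ x₁ : List A) :
    (∃ w₀ ∈ N₀.accepts, ∃ w₁ ∈ N₁.accepts,
        w₀.filterMap Prod.snd = w₁.filterMap Prod.snd ∧
        w₀.filterMap Prod.fst = x₀ ∧ w₁.filterMap Prod.fst = x₁) ↔
    (∃ w₀ ∈ (padNFA N₀).accepts, ∃ w₁ ∈ (padNFA N₁).accepts,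
        w₀.map Prod.snd = w₁.map Prod.snd ∧
        w₀.filterMap Prod.fst = x₀ ∧ w₁.filterMap Prod.fst = x₁) := by
  constructor
  · rintro ⟨w₀, hw₀, w₁, hw₁, hsnd, hf₀, hf₁⟩
    obtain ⟨u₀, u₁, hp₀, hp₁, heq⟩ := sync w₀ w₁ hsnd
    exact ⟨u₀, pad_accepts N₀ hp₀ hw₀, u₁, pad_accepts N₁ hp₁ hw₁, heq,
      hp₀.filterMap_fst.trans hf₀, hp₁.filterMap_fst.trans hf₁⟩
  · rintro ⟨u₀, hu₀, u₁, hu₁, heq, hf₀, hf₁⟩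
    obtain ⟨w₀, hp₀, hw₀⟩ := unpad_accepts N₀ hu₀
    obtain ⟨w₁, hp₁, hw₁⟩ := unpad_accepts N₁ hu₁
    refine ⟨w₀, hw₀, w₁, hw₁, ?_, ?_, ?_⟩
    · have key : ∀ (l : List (Option A × Option B)),
          l.filterMap Prod.snd = (l.map Prod.snd).filterMap id := by
        intro l; rw [List.filterMap_map]; rfl
      rw [← hp₀.filterMap_snd, ← hp₁.filterMap_snd, key u₀, key u₁, heq]
    · rw [← hp₀.filterMap_fst]; exact hf₀
    · rw [← hp₁.filterMap_fst]; exact hf₁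
end

section
/- Reduction of codirect to strict codirect solutions: let A, B be types, Q a finite type, M : NFA A Q a Mathlib NFA, and σ σ' : A → List B. Then M has a codirect solution with respect to (σ, σ') if and only if there exist t ≥ 1 and states q : Fin t → Q with q 0 ∈ M.start and q (t-1) ∈ M.accept such that for every i < t - 1, the NFA with the same step function as M, start set {q i} and accept set {q (i+1)} has a strict codirect solution with respect to (σ, σ'). -/
/-!
Read `w` letter by letter, comparing the produced prefix `σ(w[:k])` with the consumed prefix
`vs[:k]`; a codirect solution keeps the consumed part no longer than the produced one. At a
position where the two have equal length both words factor, so a codirect solution is cut at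
each such position into strict codirect solutions, and conversely strict (indeed any) codirect
solutions between consecutive states of a run concatenate to a codirect solution. The states of
`M` at the cut points form the sequence `q`.
-/

/-- `w` is a codirect solution for the NFA `M` with respect to the morphisms
`σ, σ'`, witnessed by `vs`. -/
def CodirectWitness {A B Q : Type*} (M : NFA A Q) (σ σ' : A → List B)
    (w : List A) (vs : List (List B)) : Prop :=
  w ∈ M.accepts ∧ ∃ h : vs.length = w.length,
    (∀ k, ∀ hk : k < w.length, (vs.get ⟨k, by omega⟩).Sublist (σ' (w.get ⟨k, hk⟩))) ∧
    w.flatMap σ = vs.flatten ∧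
    ∀ k ≤ w.length, ((vs.take k).flatten).length ≤ ((w.take k).flatMap σ).length

/-- `w` is a strict codirect solution for the NFA `M` with respect to `σ, σ'`,
witnessed by `vs`. -/
def StrictCodirectWitness {A B Q : Type*} (M : NFA A Q) (σ σ' : A → List B)
    (w : List A) (vs : List (List B)) : Prop :=
  CodirectWitness M σ σ' w vs ∧
    ∀ k, 1 ≤ k → k < w.length →
      ((vs.take k).flatten).length < ((w.take k).flatMap σ).length

open List Relation

theorem Relation.reflTransGen_iff_exists_fin {α : Type*} {r : α → α → Prop} {a b : α} :
    ReflTransGen r a b ↔ ∃ n, ∃ q : Fin (n + 1) → α,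
      q 0 = a ∧ q (Fin.last n) = b ∧ ∀ i : Fin n, r (q i.castSucc) (q i.succ) := by
  constructor
  · intro h
    obtain ⟨l, hchain, rfl⟩ := exists_isChain_cons_of_relationReflTransGen h
    exact ⟨l.length, (a :: l).get, rfl, by simp [getLast_eq_getElem],
      fun i => isChain_iff_getElem.mp hchain i (by simp)⟩
  · rintro ⟨n, q, rfl, rfl, hq⟩
    have hne : List.ofFn q ≠ [] := by simp
    convert relationReflTransGen_of_exists_isChain (List.ofFn q) ?_ hne using 1
    · rw [head_ofFn]; rfl
    · rw [getLast_ofFn]; rfl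
    · refine isChain_iff_getElem.mpr fun i hi => ?_
      simp only [List.getElem_ofFn]
      exact hq ⟨i, by simpa using hi⟩

namespace NFA

variable {α σ : Type*}

def between (M : NFA α σ) (p q : σ) : NFA α σ := { M with start := {p}, accept := {q} }

variable {M : NFA α σ}

theorem mem_between_accepts {p q : σ} {w : List α} :
    w ∈ (M.between p q).accepts ↔ q ∈ M.evalFrom {p} w := by
  show (∃ s ∈ ({q} : Set σ), s ∈ M.evalFrom {p} w) ↔ _
  simp

theorem mem_accepts_iff_exists_between {w : List α} :
    w ∈ M.accepts ↔ ∃ p ∈ M.start, ∃ q ∈ M.accept, w ∈ (M.between p q).accepts := by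
  rw [mem_accepts]
  simp only [mem_between_accepts, mem_evalFrom_iff_exists (S := M.start)]
  constructor
  · rintro ⟨q, hq, p, hp, h⟩
    exact ⟨p, hp, q, hq, h⟩
  · rintro ⟨p, hp, q, hq, h⟩
    exact ⟨q, hq, p, hp, h⟩

theorem append_mem_between_accepts {p q : σ} {u v : List α} :
    u ++ v ∈ (M.between p q).accepts ↔
      ∃ r, u ∈ (M.between p r).accepts ∧ v ∈ (M.between r q).accepts := by
  simp only [mem_between_accepts, evalFrom_append, mem_evalFrom_iff_exists (S := M.evalFrom _ u)]

end NFA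

namespace Codirect

variable {A B Q : Type*} (σ σ' : A → List B)

def Admissible (w : List A) (vs : List (List B)) : Prop :=
  Forall₂ (fun v a => v.Sublist (σ' a)) vs w ∧ w.flatMap σ = vs.flatten ∧
    ∀ k ≤ w.length, ((vs.take k).flatten).length ≤ ((w.take k).flatMap σ).length

variable {σ σ'}

theorem codirectWitness_iff {M : NFA A Q} {w : List A} {vs : List (List B)} :
    CodirectWitness M σ σ' w vs ↔ w ∈ M.accepts ∧ Admissible σ σ' w vs := by
  simp only [CodirectWitness, Admissible, forall₂_iff_get]
  grind

theorem Admissible.nil : Admissible σ σ' [] [] := by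
  simp [Admissible]

theorem Admissible.append {w₁ w₂ : List A} {vs₁ vs₂ : List (List B)}
    (h₁ : Admissible σ σ' w₁ vs₁) (h₂ : Admissible σ σ' w₂ vs₂) :
    Admissible σ σ' (w₁ ++ w₂) (vs₁ ++ vs₂) := by
  obtain ⟨sub₁, flat₁, pre₁⟩ := h₁
  obtain ⟨sub₂, flat₂, pre₂⟩ := h₂
  have len₁ := sub₁.length_eq
  refine ⟨rel_append sub₁ sub₂, by simp [flat₁, flat₂], fun k hk => ?_⟩
  rcases le_or_gt k w₁.length with hk₁ | hk₁
  · rw [take_append_of_le_length hk₁, take_append_of_le_length (len₁ ▸ hk₁)]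
    exact pre₁ k hk₁
  · obtain ⟨j, rfl⟩ := Nat.exists_eq_add_of_le hk₁.le
    rw [take_length_add_append, ← len₁, take_length_add_append]
    rw [length_append] at hk
    rw [flatten_append, flatMap_append, length_append, length_append, flat₁]
    exact Nat.add_le_add_left (pre₂ j (by omega)) _

section Split

variable {w : List A} {vs : List (List B)} {k : ℕ}

theorem Admissible.flatMap_take_drop (h : Admissible σ σ' w vs)
    (hk : ((vs.take k).flatten).length = ((w.take k).flatMap σ).length) :
    (w.take k).flatMap σ = (vs.take k).flatten ∧ (w.drop k).flatMap σ = (vs.drop k).flatten :=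
  append_inj (by rw [← flatMap_append, ← flatten_append, take_append_drop, take_append_drop,
    h.2.1]) hk.symm

theorem Admissible.take (h : Admissible σ σ' w vs)
    (hk : ((vs.take k).flatten).length = ((w.take k).flatMap σ).length) :
    Admissible σ σ' (w.take k) (vs.take k) := by
  refine ⟨forall₂_take k h.1, (h.flatMap_take_drop hk).1, fun j hj => ?_⟩
  rw [length_take] at hj
  rw [take_take, take_take, min_eq_left (by omega)]
  exact h.2.2 j (by omega)

theorem Admissible.drop (h : Admissible σ σ' w vs) (hkw : k ≤ w.length)
    (hk : ((vs.take k).flatten).length = ((w.take k).flatMap σ).length) :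
    Admissible σ σ' (w.drop k) (vs.drop k) := by
  refine ⟨forall₂_drop k h.1, (h.flatMap_take_drop hk).2, fun j hj => ?_⟩
  rw [length_drop] at hj
  have := h.2.2 (k + j) (by omega)
  rw [take_add, take_add, flatten_append, flatMap_append, length_append, length_append] at this
  omega

end Split

theorem Admissible.exists_first_balance {w : List A} {vs : List (List B)}
    (h : Admissible σ σ' w vs) (hw : w ≠ []) :
    ∃ k, 0 < k ∧ k ≤ w.length ∧
      ((vs.take k).flatten).length = ((w.take k).flatMap σ).length ∧
      ∀ j, 1 ≤ j → j < k → ((vs.take j).flatten).length < ((w.take j).flatMap σ).length := by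
  classical
  have hP : ∃ k, 0 < k ∧ k ≤ w.length ∧
      ((vs.take k).flatten).length = ((w.take k).flatMap σ).length :=
    ⟨w.length, length_pos_iff.mpr hw, le_rfl, by
      rw [take_of_length_le le_rfl, take_of_length_le h.1.length_eq.le, h.2.1]⟩
  obtain ⟨hpos, hlen, hbal⟩ := Nat.find_spec hP
  refine ⟨Nat.find hP, hpos, hlen, hbal, fun j hj hjk => ?_⟩
  have hne := Nat.find_min hP hjk
  have hle := h.2.2 j (by omega)
  grind

variable (σ σ') in
def StrictStep (M : NFA A Q) (p q : Q) : Prop :=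
  ∃ w vs, StrictCodirectWitness (M.between p q) σ σ' w vs

theorem reflTransGen_strictStep_of_admissible {M : NFA A Q} {p q : Q} {w : List A}
    {vs : List (List B)} (hw : w ∈ (M.between p q).accepts) (h : Admissible σ σ' w vs) :
    ReflTransGen (StrictStep σ σ' M) p q := by
  induction hn : w.length using Nat.strong_induction_on generalizing w vs p with
  | _ n ih =>
  obtain rfl | hne := eq_or_ne w []
  · rw [NFA.mem_between_accepts] at hw
    simp only [NFA.evalFrom_nil, Set.mem_singleton_iff] at hw
    exact hw ▸ .refl
  obtain ⟨k, hk0, hkn, hbal, hstrict⟩ := h.exists_first_balance hne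
  rw [← take_append_drop k w, NFA.append_mem_between_accepts] at hw
  obtain ⟨r, hw₁, hw₂⟩ := hw
  refine .head ⟨w.take k, vs.take k, codirectWitness_iff.mpr ⟨hw₁, h.take hbal⟩, ?_⟩
    (ih _ (by simp; omega) hw₂ (h.drop hkn hbal) rfl)
  intro j hj1 hj2
  rw [take_take, take_take, min_eq_left (by simp at hj2; omega)]
  exact hstrict j hj1 (by simp at hj2; omega)

theorem exists_codirectWitness_between_iff {M : NFA A Q} {p q : Q} :
    (∃ w vs, CodirectWitness (M.between p q) σ σ' w vs) ↔
      ReflTransGen (StrictStep σ σ' M) p q := by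
  simp only [codirectWitness_iff]
  refine ⟨fun ⟨w, vs, hw, h⟩ => reflTransGen_strictStep_of_admissible hw h, fun h => ?_⟩
  induction h with
  | refl => exact ⟨[], [], by simp [NFA.mem_between_accepts], .nil⟩
  | tail _ hstep ih =>
    obtain ⟨w₁, vs₁, hw₁, h₁⟩ := ih
    obtain ⟨w₂, vs₂, hstrict, -⟩ := hstep
    obtain ⟨hw₂, h₂⟩ := codirectWitness_iff.mp hstrict
    exact ⟨w₁ ++ w₂, vs₁ ++ vs₂, NFA.append_mem_between_accepts.mpr ⟨_, hw₁, hw₂⟩,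
      h₁.append h₂⟩

theorem exists_codirectWitness_iff_exists_between {M : NFA A Q} :
    (∃ w vs, CodirectWitness M σ σ' w vs) ↔
      ∃ p ∈ M.start, ∃ q ∈ M.accept, ∃ w vs, CodirectWitness (M.between p q) σ σ' w vs := by
  constructor
  · rintro ⟨w, vs, hw, h⟩
    obtain ⟨p, hp, q, hq, hw⟩ := NFA.mem_accepts_iff_exists_between.mp hw
    exact ⟨p, hp, q, hq, w, vs, hw, h⟩
  · rintro ⟨p, hp, q, hq, w, vs, hw, h⟩
    exact ⟨w, vs, NFA.mem_accepts_iff_exists_between.mpr ⟨p, hp, q, hq, hw⟩, h⟩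

end Codirect

/-- Reduction of codirect solutions to strict codirect solutions. -/
theorem codirect_iff_pieces_strict_codirect {A B Q : Type*}
    (M : NFA A Q) (σ σ' : A → List B) :
    (∃ w vs, CodirectWitness M σ σ' w vs) ↔
    ∃ t : ℕ, ∃ ht : 1 ≤ t, ∃ q : Fin t → Q,
      q ⟨0, by omega⟩ ∈ M.start ∧ q ⟨t - 1, by omega⟩ ∈ M.accept ∧
      ∀ i, ∀ hi : i < t - 1, ∃ w vs,
        StrictCodirectWitness
          { M with start := {q ⟨i, by omega⟩}, accept := {q ⟨i + 1, by omega⟩} }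
          σ σ' w vs := by
  calc (∃ w vs, CodirectWitness M σ σ' w vs)
      ↔ ∃ p ∈ M.start, ∃ q ∈ M.accept, ReflTransGen (Codirect.StrictStep σ σ' M) p q := by
        rw [Codirect.exists_codirectWitness_iff_exists_between]
        simp only [Codirect.exists_codirectWitness_between_iff]
    _ ↔ _ := by
        simp only [reflTransGen_iff_exists_fin]
        constructor
        · rintro ⟨_, hp, _, hq, n, q, rfl, rfl, hchain⟩
          exact ⟨n + 1, by omega, q, hp, hq, fun i hi => hchain ⟨i, by omega⟩⟩
        · rintro ⟨t, ht, q, hp, hq, hchain⟩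
          obtain ⟨n, rfl⟩ : ∃ n, t = n + 1 := ⟨t - 1, by omega⟩
          exact ⟨_, hp, _, hq, n, q, rfl, rfl, fun i => hchain i i.isLt⟩
end

section
/- A minimal codirect solution has at most |Q| synchronization points: let A, B be types, Q a finite type, M : NFA A Q a Mathlib NFA, and σ σ' : A → List B. Suppose w is a codirect solution for M (w.r.t. σ, σ') of minimal length, i.e. every codirect solution w' satisfies w.length ≤ w'.length, and let vs be any witness for w. Then the number of indices s with 0 ≤ s ≤ w.length and ((w.take s).flatMap σ).length = ((vs.take s).flatten).length is at most Fintype.card Q; formally, ((Finset.range (w.length + 1)).filter (fun s => ((w.take s).flatMap σ).length = ((vs.take s).flatten).length)).card ≤ Fintype.card Q. -/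
theorem NFA.append_mem_accepts_iff {α σ : Type*} {M : NFA α σ} {x y : List α} :
    x ++ y ∈ M.accepts ↔ ∃ p ∈ M.eval x, y ∈ M.acceptsFrom {p} := by
  rw [accepts_eq_acceptsFrom_start, append_mem_acceptsFrom]
  constructor
  · rintro ⟨q, hq, hqy⟩
    obtain ⟨p, hp, hpq⟩ := mem_evalFrom_iff_exists.1 hqy
    exact ⟨p, hp, q, hq, hpq⟩
  · rintro ⟨p, hp, q, hq, hpq⟩
    exact ⟨q, hq, mem_evalFrom_iff_exists.2 ⟨p, hp, hpq⟩⟩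

section CodirectPair

/-- A codirect witness without the automaton. The prefix condition is required for all `k`
(beyond `w.length` it follows from `w.flatMap σ = vs.flatten`), which makes the class closed
under `++` with no side condition. -/
def IsCodirectPair {A B : Type*} (σ σ' : A → List B) (w : List A) (vs : List (List B)) : Prop :=
  List.Forall₂ (fun v a => v.Sublist (σ' a)) vs w ∧ w.flatMap σ = vs.flatten ∧
    ∀ k, ((vs.take k).flatten).length ≤ ((w.take k).flatMap σ).length

variable {A B : Type*} {σ σ' : A → List B} {w u : List A} {vs us : List (List B)}

theorem codirectWitness_iff {Q : Type*} {M : NFA A Q} :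
    CodirectWitness M σ σ' w vs ↔ w ∈ M.accepts ∧ IsCodirectPair σ σ' w vs := by
  refine and_congr_right fun _ => ?_
  rw [IsCodirectPair, List.forall₂_iff_get]
  constructor
  · rintro ⟨hlen, hsub, hflat, hle⟩
    refine ⟨⟨hlen, fun k _ hk => hsub k hk⟩, hflat, fun k => ?_⟩
    by_cases hk : k ≤ w.length
    · exact hle k hk
    · rw [List.take_of_length_le (by omega), List.take_of_length_le (by omega), hflat]
  · rintro ⟨⟨hlen, hsub⟩, hflat, hle⟩
    exact ⟨hlen, fun k hk => hsub k _ hk, hflat, fun k _ => hle k⟩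

theorem IsCodirectPair.length_eq (h : IsCodirectPair σ σ' w vs) : vs.length = w.length :=
  h.1.length_eq

theorem flatMap_take_eq_and_drop_eq (hflat : w.flatMap σ = vs.flatten) {k : ℕ}
    (hk : ((w.take k).flatMap σ).length = ((vs.take k).flatten).length) :
    (w.take k).flatMap σ = (vs.take k).flatten ∧ (w.drop k).flatMap σ = (vs.drop k).flatten := by
  refine List.append_inj ?_ hk
  rw [← List.flatMap_append, ← List.flatten_append, List.take_append_drop,
    List.take_append_drop, hflat]

theorem IsCodirectPair.take (h : IsCodirectPair σ σ' w vs) {k : ℕ}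
    (hk : ((w.take k).flatMap σ).length = ((vs.take k).flatten).length) :
    IsCodirectPair σ σ' (w.take k) (vs.take k) := by
  refine ⟨List.forall₂_take k h.1, (flatMap_take_eq_and_drop_eq h.2.1 hk).1, fun j => ?_⟩
  simpa only [List.take_take] using h.2.2 (min j k)

theorem IsCodirectPair.drop (h : IsCodirectPair σ σ' w vs) {k : ℕ}
    (hk : ((w.take k).flatMap σ).length = ((vs.take k).flatten).length) :
    IsCodirectPair σ σ' (w.drop k) (vs.drop k) := by
  refine ⟨List.forall₂_drop k h.1, (flatMap_take_eq_and_drop_eq h.2.1 hk).2, fun j => ?_⟩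
  have hle := h.2.2 (k + j)
  simp only [List.take_add, List.flatMap_append, List.flatten_append, List.length_append] at hle
  omega

theorem IsCodirectPair.append (hw : IsCodirectPair σ σ' w vs) (hu : IsCodirectPair σ σ' u us) :
    IsCodirectPair σ σ' (w ++ u) (vs ++ us) := by
  refine ⟨List.rel_append hw.1 hu.1, by simp only [List.flatMap_append, List.flatten_append,
    hw.2.1, hu.2.1], fun k => ?_⟩
  simp only [List.take_append, List.flatMap_append, List.flatten_append, List.length_append,
    hw.length_eq]
  exact Nat.add_le_add (hw.2.2 k) (hu.2.2 _)

end CodirectPair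

/-- A minimal codirect solution has at most `|Q|` synchronization points. -/
theorem minimal_codirect_sync_points_le_card {A B Q : Type*} [Fintype Q]
    (M : NFA A Q) (σ σ' : A → List B) (w : List A) (vs : List (List B))
    (hw : CodirectWitness M σ σ' w vs)
    (hmin : ∀ w' vs', CodirectWitness M σ σ' w' vs' → w.length ≤ w'.length) :
    ((Finset.range (w.length + 1)).filter
        (fun s => ((w.take s).flatMap σ).length = ((vs.take s).flatten).length)).card
      ≤ Fintype.card Q := by
  obtain ⟨hacc, hpair⟩ := codirectWitness_iff.1 hw
  have hcut (s : ℕ) : ∃ p ∈ M.eval (w.take s), w.drop s ∈ M.acceptsFrom {p} :=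
    NFA.append_mem_accepts_iff.1 (by rwa [List.take_append_drop])
  choose f hf_eval hf_accepts using hcut
  rw [← Finset.card_univ]
  refine Finset.card_le_card_of_injOn f (fun _ _ => Finset.mem_coe.2 (Finset.mem_univ _)) ?_
  intro s hs t ht hst
  simp only [Finset.coe_filter, Finset.mem_range, Set.mem_ofPred_eq] at hs ht
  by_contra hne
  wlog hlt : s < t generalizing s t
  · exact this hst.symm ht hs (Ne.symm hne) (by omega)
  have hsplice : CodirectWitness M σ σ' (w.take s ++ w.drop t) (vs.take s ++ vs.drop t) :=
    codirectWitness_iff.2 ⟨NFA.append_mem_accepts_iff.2 ⟨f t, hst ▸ hf_eval s, hf_accepts t⟩,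
      (hpair.take hs.2).append (hpair.drop ht.2)⟩
  have hshorter := hmin _ _ hsplice
  simp only [List.length_append, List.length_take, List.length_drop] at hshorter
  omega
end

section
/- PCP gadget for ternary rational relations with two subsequence constraints from the same component: let A be a type, n : ℕ, and u, v : Fin n → List A with (u i).length ≤ 1 and (v i).length ≤ 1 for every i. Over the alphabet A ⊕ A (the second summand playing the role of hatted letters), for is : List (Fin n) set x(is) := is.flatMap (fun i => (u i).map Sum.inl ++ (v i).map Sum.inr). Say y is a u-interleaving for is if there exists ws' : List (List A) with ws'.length = is.length + 1 and y = (ws'.get 0).map Sum.inl ++ (List.range is.length).flatMap (fun j => (u (is.get j)).map Sum.inr ++ (ws'.get (j+1)).map Sum.inl); say z is a v-interleaving for is if there exists zs : List (List A) with zs.length = is.length + 1 and z = (zs.get 0).map Sum.inr ++ (List.range is.length).flatMap (fun j => (v (is.get j)).map Sum.inl ++ (zs.get (j+1)).map Sum.inr). Then the following are equivalent: (i) there exist a nonempty is : List (Fin n), a u-interleaving y for is, and a v-interleaving z for is, with x(is) a sublist (List.Sublist) of y and x(is) a sublist of z; (ii) there exists a nonempty is : List (Fin n) with is.flatMap u =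 is.flatMap v (a solution of the Post Correspondence Problem instance (u, v)). -/
/-- The word `x(is)` of a PCP instance `(u, v)` over the doubled alphabet
`A ⊕ A` (the right summand playing the role of hatted letters). -/
def pcpX {A : Type*} {n : ℕ} (u v : Fin n → List A) (is : List (Fin n)) :
    List (A ⊕ A) :=
  is.flatMap fun i => (u i).map Sum.inl ++ (v i).map Sum.inr

/-- The `u`-interleaving of `is` determined by the padding words `ws'`. -/
def uInterleave {A : Type*} {n : ℕ} (u : Fin n → List A) (is : List (Fin n))
    (ws' : List (List A)) (h : ws'.length = is.length + 1) : List (A ⊕ A) :=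
  (ws'.get ⟨0, by omega⟩).map Sum.inl ++
    (List.finRange is.length).flatMap fun j =>
      (u (is.get j)).map Sum.inr ++
        (ws'.get ⟨j.1 + 1, by have := j.isLt; omega⟩).map Sum.inl

/-- The `v`-interleaving of `is` determined by the padding words `zs`. -/
def vInterleave {A : Type*} {n : ℕ} (v : Fin n → List A) (is : List (Fin n))
    (zs : List (List A)) (h : zs.length = is.length + 1) : List (A ⊕ A) :=
  (zs.get ⟨0, by omega⟩).map Sum.inr ++
    (List.finRange is.length).flatMap fun j =>
      (v (is.get j)).map Sum.inl ++
        (zs.get ⟨j.1 + 1, by have := j.isLt; omega⟩).map Sum.inr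

namespace PCPAux
variable {A : Type*} {n : ℕ}

@[simp] theorem filterMap_getRight?_map_inl (l : List A) :
    (l.map (Sum.inl : A → A ⊕ A)).filterMap Sum.getRight? = [] := by
  induction l <;> simp_all [Sum.getRight?]

@[simp] theorem filterMap_getRight?_map_inr (l : List A) :
    (l.map (Sum.inr : A → A ⊕ A)).filterMap Sum.getRight? = l := by
  induction l <;> simp_all [Sum.getRight?]

@[simp] theorem filterMap_getLeft?_map_inl (l : List A) :
    (l.map (Sum.inl : A → A ⊕ A)).filterMap Sum.getLeft? = l := by
  induction l <;> simp_all [Sum.getLeft?]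

@[simp] theorem filterMap_getLeft?_map_inr (l : List A) :
    (l.map (Sum.inr : A → A ⊕ A)).filterMap Sum.getLeft? = [] := by
  induction l <;> simp_all [Sum.getLeft?]


@[simp] theorem filterMap_comp_gr_inl (l : List A) :
    l.filterMap ((Sum.getRight? : A ⊕ A → Option A) ∘ Sum.inl) = [] := by
  induction l <;> simp_all [Sum.getRight?]

@[simp] theorem filterMap_comp_gr_inr (l : List A) :
    l.filterMap ((Sum.getRight? : A ⊕ A → Option A) ∘ Sum.inr) = l := by
  induction l <;> simp_all [Sum.getRight?]

@[simp] theorem filterMap_comp_gl_inl (l : List A) :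
    l.filterMap ((Sum.getLeft? : A ⊕ A → Option A) ∘ Sum.inl) = l := by
  induction l <;> simp_all [Sum.getLeft?]

@[simp] theorem filterMap_comp_gl_inr (l : List A) :
    l.filterMap ((Sum.getLeft? : A ⊕ A → Option A) ∘ Sum.inr) = [] := by
  induction l <;> simp_all [Sum.getLeft?]

/-- Recursive form of the u-interleaving. -/
def Y (u : Fin n → List A) : List (Fin n) → List (List A) → List (A ⊕ A)
  | [], ws => (ws.headD []).map Sum.inl
  | i :: is, ws => (ws.headD []).map Sum.inl ++ (u i).map Sum.inr ++ Y u is ws.tail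

/-- Letter-level interleaving: padding before/between/after each letter of `q`. -/
def W : List A → List (List A) → List (A ⊕ A)
  | [], ws => (ws.headD []).map Sum.inl
  | c :: q, ws => (ws.headD []).map Sum.inl ++ Sum.inr c :: W q ws.tail

theorem W_cons_head (q : List A) (a : A) (ws : List (List A)) :
    W q ((a :: ws.headD []) :: ws.tail) = Sum.inl a :: W q ws := by
  cases q <;> simp [W]

theorem W_append (q₁ q₂ : List A) (ws : List (List A)) :
    W (q₁ ++ q₂) (List.replicate q₁.length [] ++ ws) = q₁.map Sum.inr ++ W q₂ ws := by
  induction q₁ with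
  | nil => simp
  | cons c q ih => simp [W, List.replicate_succ, ih]

theorem keyG (x : List (A ⊕ A)) : ∀ q : List A,
    (x.filterMap Sum.getRight?).Sublist q → ∃ ws, x.Sublist (W q ws) := by
  induction x with
  | nil => exact fun q _ => ⟨[], List.nil_sublist _⟩
  | cons a x ih =>
    intro q hq
    match a with
    | Sum.inl a =>
      simp only [List.filterMap_cons, Sum.getRight?] at hq
      obtain ⟨ws, hws⟩ := ih q hq
      exact ⟨(a :: ws.headD []) :: ws.tail, by
        rw [W_cons_head]; exact hws.cons₂ _⟩
    | Sum.inr b =>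
      simp only [List.filterMap_cons, Sum.getRight?] at hq
      rw [List.cons_sublist_iff] at hq
      obtain ⟨r₁, r₂, rfl, hb, hr⟩ := hq
      obtain ⟨s, t, rfl⟩ := List.append_of_mem hb
      obtain ⟨ws, hws⟩ := ih (t ++ r₂) (hr.trans (List.sublist_append_right _ _))
      refine ⟨List.replicate s.length [] ++ ([] :: ws), ?_⟩
      have he : (s ++ b :: t) ++ r₂ = s ++ (b :: (t ++ r₂)) := by simp
      rw [he, W_append]
      refine List.Sublist.trans ?_ (List.sublist_append_right (s.map Sum.inr) _)
      simpa [W] using hws.cons₂ (Sum.inr b)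

theorem W_eq_Y (u : Fin n → List A) (hu : ∀ i, (u i).length ≤ 1) :
    ∀ (is : List (Fin n)) (ws : List (List A)),
    ∃ ws', ws'.length = is.length + 1 ∧ W (is.flatMap u) ws = Y u is ws' := by
  intro is
  induction is with
  | nil => exact fun ws => ⟨[ws.headD []], rfl, by simp [W, Y]⟩
  | cons i is ih =>
    intro ws
    have h1 := hu i
    rcases hui : u i with _ | ⟨a, _ | ⟨b, t⟩⟩
    · obtain ⟨ws', hl, he⟩ := ih ws
      exact ⟨[] :: ws', by simp [hl], by simp [Y, hui, he]⟩
    · obtain ⟨ws', hl, he⟩ := ih ws.tail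
      exact ⟨ws.headD [] :: ws', by simp [hl], by simp [Y, W, hui, he]⟩
    · rw [hui] at h1; simp at h1

theorem uInterleave_cons (u : Fin n → List A) (i : Fin n) (is : List (Fin n))
    (w : List A) (ws : List (List A)) (h : (w::ws).length = (i::is).length + 1)
    (h' : ws.length = is.length + 1) :
    uInterleave u (i::is) (w::ws) h =
      w.map Sum.inl ++ (u i).map Sum.inr ++ uInterleave u is ws h' := by
  simp [uInterleave, List.finRange_succ, List.flatMap_map, Function.comp_def]

theorem vInterleave_cons (v : Fin n → List A) (i : Fin n) (is : List (Fin n))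
    (z : List A) (zs : List (List A)) (h : (z::zs).length = (i::is).length + 1)
    (h' : zs.length = is.length + 1) :
    vInterleave v (i::is) (z::zs) h =
      z.map Sum.inr ++ (v i).map Sum.inl ++ vInterleave v is zs h' := by
  simp [vInterleave, List.finRange_succ, List.flatMap_map, Function.comp_def]

theorem uInterleave_eq_Y (u : Fin n → List A) :
    ∀ (is : List (Fin n)) (ws : List (List A)) (h : ws.length = is.length + 1),
    uInterleave u is ws h = Y u is ws := by
  intro is
  induction is with
  | nil =>
    intro ws h
    match ws, h with
    | w :: ws, h => simp [uInterleave, Y]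
  | cons i is ih =>
    intro ws h
    match ws, h with
    | w :: ws, h =>
      have h' : ws.length = is.length + 1 := by simpa using h
      rw [uInterleave_cons u i is w ws h h', ih ws h']
      simp [Y]

theorem vInterleave_eq_Y (v : Fin n → List A) :
    ∀ (is : List (Fin n)) (zs : List (List A)) (h : zs.length = is.length + 1),
    vInterleave v is zs h = (Y v is zs).map Sum.swap := by
  intro is
  induction is with
  | nil =>
    intro zs h
    match zs, h with
    | z :: zs, h => simp [vInterleave, Y, Function.comp_def]
  | cons i is ih =>
    intro zs h
    match zs, h with
    | z :: zs, h =>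
      have h' : zs.length = is.length + 1 := by simpa using h
      rw [vInterleave_cons v i is z zs h h', ih zs h']
      simp [Y, Function.comp_def]

theorem filterMap_right_pcpX (u v : Fin n → List A) (is : List (Fin n)) :
    (pcpX u v is).filterMap Sum.getRight? = is.flatMap v := by
  induction is with
  | nil => simp [pcpX]
  | cons i is ih =>
    simp only [pcpX, List.flatMap_cons, List.filterMap_append] at *
    simp [ih]

theorem filterMap_left_pcpX (u v : Fin n → List A) (is : List (Fin n)) :
    (pcpX u v is).filterMap Sum.getLeft? = is.flatMap u := by
  induction is with
  | nil => simp [pcpX]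
  | cons i is ih =>
    simp only [pcpX, List.flatMap_cons, List.filterMap_append] at *
    simp [ih]

theorem filterMap_right_Y (u : Fin n → List A) :
    ∀ (is : List (Fin n)) (ws : List (List A)),
    (Y u is ws).filterMap Sum.getRight? = is.flatMap u := by
  intro is
  induction is with
  | nil => intro ws; simp [Y]
  | cons i is ih =>
    intro ws
    simp [Y, List.filterMap_append, ih]

end PCPAux

/-- PCP gadget for ternary rational relations with two subsequence constraints
from the same component. -/
theorem pcp_gadget_two_subseq {A : Type*} {n : ℕ} (u v : Fin n → List A)
    (hu : ∀ i, (u i).length ≤ 1) (hv : ∀ i, (v i).length ≤ 1) :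
    (∃ is : List (Fin n), is ≠ [] ∧
      ∃ (ws' : List (List A)) (h1 : ws'.length = is.length + 1)
        (zs : List (List A)) (h2 : zs.length = is.length + 1),
        (pcpX u v is).Sublist (uInterleave u is ws' h1) ∧
        (pcpX u v is).Sublist (vInterleave v is zs h2)) ↔
    ∃ is : List (Fin n), is ≠ [] ∧ is.flatMap u = is.flatMap v := by
  have hswap : ((Sum.getLeft? : A ⊕ A → Option A) ∘ Sum.swap) = Sum.getRight? := by
    funext x; cases x <;> rfl
  have hswap' : ((Sum.getRight? : A ⊕ A → Option A) ∘ Sum.swap) = Sum.getLeft? := by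
    funext x; cases x <;> rfl
  constructor
  · rintro ⟨is, hne, ws', h1, zs, h2, s1, s2⟩
    refine ⟨is, hne, ?_⟩
    have hvu : (is.flatMap v).Sublist (is.flatMap u) := by
      have h := s1.filterMap Sum.getRight?
      rwa [PCPAux.filterMap_right_pcpX, PCPAux.uInterleave_eq_Y,
        PCPAux.filterMap_right_Y] at h
    have huv : (is.flatMap u).Sublist (is.flatMap v) := by
      have h := s2.filterMap Sum.getLeft?
      rwa [PCPAux.filterMap_left_pcpX, PCPAux.vInterleave_eq_Y,
        List.filterMap_map, hswap, PCPAux.filterMap_right_Y] at h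
    exact huv.antisymm hvu
  · rintro ⟨is, hne, heq⟩
    refine ⟨is, hne, ?_⟩
    obtain ⟨ws0, hws0⟩ := PCPAux.keyG (pcpX u v is) (is.flatMap u)
      (by rw [PCPAux.filterMap_right_pcpX, ← heq])
    obtain ⟨ws', hlen, hWY⟩ := PCPAux.W_eq_Y u hu is ws0
    obtain ⟨zs0, hzs0⟩ := PCPAux.keyG ((pcpX u v is).map Sum.swap) (is.flatMap v)
      (by rw [List.filterMap_map, hswap', PCPAux.filterMap_left_pcpX, heq])
    obtain ⟨zs, hlenz, hWYz⟩ := PCPAux.W_eq_Y v hv is zs0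
    refine ⟨ws', hlen, zs, hlenz, ?_, ?_⟩
    · rw [PCPAux.uInterleave_eq_Y, ← hWY]; exact hws0
    · rw [PCPAux.vInterleave_eq_Y]
      have h := (hWYz ▸ hzs0).map Sum.swap
      simpa [List.map_map, Function.comp_def, Sum.swap_swap] using h
end
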